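/- arXiv:2312.06252 — 9 statements merged into one kernel-verified Lean document; each statement's English description precedes it below -/
import Mathlib

section
/- Let n ≥ 1 be an integer, let A be an n×n real symmetric matrix, let t > 0 be a real number and let v ∈ ℝⁿ. Then ((t+n)/(t+n−1))·‖A·v‖² ≤ ‖v‖²·( ‖A‖_HS² + (tr A)²/t ), where ‖·‖ denotes the Euclidean norm on ℝⁿ, tr A is the trace of A, and ‖A‖_HS² = ∑_{i,j} A_{ij}² is the squared Hilbert–Schmidt (Frobenius) norm of A. -/
open Finset Matrix

/-- Core scalar inequality: each eigenvalue satisfies the refined bound. -/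
lemma kato_pointwise (n : ℕ) (hn : 1 ≤ n) (μ : Fin n → ℝ) (t : ℝ) (ht : 0 < t) (k : Fin n) :
    ((t + n) / (t + n - 1)) * (μ k) ^ 2 ≤ (∑ i, (μ i) ^ 2) + (∑ i, μ i) ^ 2 / t := by
  set s := ∑ i ∈ Finset.univ.erase k, μ i with hs
  set Q := ∑ i ∈ Finset.univ.erase k, (μ i) ^ 2 with hQdef
  have h1 : ∑ i, μ i = μ k + s := (Finset.add_sum_erase _ μ (Finset.mem_univ k)).symm
  have h2 : ∑ i, (μ i) ^ 2 = (μ k) ^ 2 + Q :=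
    (Finset.add_sum_erase _ (fun i => (μ i) ^ 2) (Finset.mem_univ k)).symm
  have hQ : 0 ≤ Q := Finset.sum_nonneg fun _ _ => sq_nonneg _
  have hcard : (((Finset.univ.erase k).card : ℕ) : ℝ) = (n : ℝ) - 1 := by
    rw [Finset.card_erase_of_mem (Finset.mem_univ k), Finset.card_univ, Fintype.card_fin,
      Nat.cast_sub hn, Nat.cast_one]
  have hsq : s ^ 2 ≤ ((n : ℝ) - 1) * Q := by
    have h := sq_sum_le_card_mul_sum_sq (s := Finset.univ.erase k) (f := μ)
    rw [hcard] at h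
    exact h
  set m : ℝ := (n : ℝ) - 1 with hm
  have hm0 : 0 ≤ m := by
    have : (1 : ℝ) ≤ (n : ℝ) := by exact_mod_cast hn
    simp [hm]; linarith
  have htm : (0 : ℝ) < t + m := by linarith
  have htn : t + (n : ℝ) - 1 = t + m := by rw [hm]; ring
  have htn2 : t + (n : ℝ) = t + m + 1 := by rw [hm]; ring
  rw [h1, h2, htn, htn2]
  rw [div_mul_eq_mul_div, div_le_iff₀ htm, ← sub_nonneg]
  rw [show ((μ k) ^ 2 + Q + (μ k + s) ^ 2 / t) * (t + m) - (t + m + 1) * (μ k) ^ 2 =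
      ((((μ k) ^ 2 * t + Q * t + (μ k + s) ^ 2) * (t + m)) - (t + m + 1) * (μ k) ^ 2 * t) / t by
    field_simp]
  apply div_nonneg _ ht.le
  rcases eq_or_lt_of_le hm0 with hm0' | hm0'
  · have hs0 : s = 0 := by
      have : s ^ 2 ≤ 0 := by rw [← hm0'] at hsq; linarith [hsq]
      nlinarith [sq_nonneg s]
    rw [← hm0', hs0]
    nlinarith [sq_nonneg (μ k), mul_nonneg hQ ht.le]
  · have h1' : 0 ≤ m * Q - s ^ 2 := by linarith
    have hgoal : 0 ≤ m * ((((μ k) ^ 2 * t + Q * t + (μ k + s) ^ 2) * (t + m)) -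
        (t + m + 1) * (μ k) ^ 2 * t) := by
      have hid : m * ((((μ k) ^ 2 * t + Q * t + (μ k + s) ^ 2) * (t + m)) -
          (t + m + 1) * (μ k) ^ 2 * t) =
          t ^ 2 * (m * Q - s ^ 2) + t * m * (m * Q - s ^ 2)
            + (t * s + m * (μ k + s)) ^ 2 := by ring
      rw [hid]
      have a1 : 0 ≤ t ^ 2 * (m * Q - s ^ 2) := mul_nonneg (sq_nonneg t) h1'
      have a2 : 0 ≤ t * m * (m * Q - s ^ 2) := mul_nonneg (mul_nonneg ht.le hm0) h1'
      have a3 : 0 ≤ (t * s + m * (μ k + s)) ^ 2 := sq_nonneg _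
      linarith
    exact le_of_mul_le_mul_left (by simpa using hgoal) hm0'

/-- Finite-dimensional core of the generalized refined Kato inequality:
for an `n × n` real symmetric matrix `A`, `t > 0` and `v ∈ ℝⁿ`,
`((t+n)/(t+n-1)) ‖A v‖² ≤ ‖v‖² (‖A‖_HS² + (tr A)²/t)`. -/
theorem kato_matrix_inequality (n : ℕ) (hn : 1 ≤ n)
    (A : Matrix (Fin n) (Fin n) ℝ) (hA : A.IsSymm)
    (t : ℝ) (ht : 0 < t) (v : Fin n → ℝ) :
    ((t + n) / (t + n - 1)) * (∑ i, (A.mulVec v i) ^ 2) ≤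
      (∑ i, (v i) ^ 2) * ((∑ i, ∑ j, (A i j) ^ 2) + (∑ i, A i i) ^ 2 / t) := by
  have hH : A.IsHermitian := by
    rw [Matrix.IsHermitian, Matrix.conjTranspose_eq_transpose_of_trivial]; exact hA
  set U : Matrix (Fin n) (Fin n) ℝ := (hH.eigenvectorUnitary : Matrix (Fin n) (Fin n) ℝ) with hUdef
  set μ : Fin n → ℝ := hH.eigenvalues with hmu
  have hUU : star U * U = 1 := Unitary.coe_star_mul_self hH.eigenvectorUnitary
  have hUU' : U * star U = 1 := (Matrix.mem_unitaryGroup_iff).mp hH.eigenvectorUnitary.2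
  have hD : Matrix.diagonal ((RCLike.ofReal : ℝ → ℝ) ∘ μ) = Matrix.diagonal μ := by
    congr 1
  have hspec : A = U * Matrix.diagonal μ * star U := by
    rw [← hD]; exact hH.spectral_theorem
  -- norm preservation under U
  have hnorm : ∀ x : Fin n → ℝ, ∑ i, (U *ᵥ x) i ^ 2 = ∑ i, x i ^ 2 := by
    intro x
    have key : (U *ᵥ x) ⬝ᵥ (U *ᵥ x) = x ⬝ᵥ x := by
      calc (U *ᵥ x) ⬝ᵥ (U *ᵥ x)
          = (x ᵥ* star U) ⬝ᵥ (U *ᵥ x) := by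
            congr 1
            rw [Matrix.star_eq_conjTranspose, Matrix.conjTranspose_eq_transpose_of_trivial,
              Matrix.vecMul_transpose]
        _ = x ⬝ᵥ (star U *ᵥ (U *ᵥ x)) := (Matrix.dotProduct_mulVec _ _ _).symm
        _ = x ⬝ᵥ x := by rw [Matrix.mulVec_mulVec, hUU, Matrix.one_mulVec]
    simpa [dotProduct, pow_two] using key
  set w : Fin n → ℝ := star U *ᵥ v with hw
  have hv : U *ᵥ w = v := by
    rw [hw, Matrix.mulVec_mulVec, hUU', Matrix.one_mulVec]
  have hDw : Matrix.diagonal μ *ᵥ w = fun i => μ i * w i := by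
    funext i
    rw [Matrix.mulVec_diagonal]
  have hAv : A *ᵥ v = U *ᵥ (fun i => μ i * w i) := by
    conv_lhs => rw [hspec]
    rw [← Matrix.mulVec_mulVec, ← Matrix.mulVec_mulVec, ← hw, hDw]
  -- trace
  have htr : ∑ i, A i i = ∑ i, μ i := by
    have h1 : ∑ i, A i i = Matrix.trace A := rfl
    have h2 : Matrix.trace A = Matrix.trace (Matrix.diagonal μ) := by
      conv_lhs => rw [hspec]
      rw [Matrix.trace_mul_cycle, hUU, one_mul]
    rw [h1, h2, Matrix.trace_diagonal]
  -- Frobenius norm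
  have hfrob : ∑ i, ∑ j, (A i j) ^ 2 = ∑ i, (μ i) ^ 2 := by
    have h1 : ∑ i, ∑ j, (A i j) ^ 2 = Matrix.trace (A * A) := by
      rw [Matrix.trace]
      apply Finset.sum_congr rfl
      intro i _
      rw [Matrix.diag_apply, Matrix.mul_apply]
      apply Finset.sum_congr rfl
      intro j _
      have : A j i = A i j := by
        conv_lhs => rw [← hA]
        rfl
      rw [this, pow_two]
    have h2 : A * A = U * (Matrix.diagonal μ * Matrix.diagonal μ) * star U := by
      conv_lhs => rw [hspec]
      simp only [Matrix.mul_assoc]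
      rw [show star U * (U * (Matrix.diagonal μ * star U)) = Matrix.diagonal μ * star U from by
        rw [← Matrix.mul_assoc, hUU, one_mul]]
    rw [h1, h2, Matrix.trace_mul_cycle, hUU, one_mul, Matrix.diagonal_mul_diagonal,
      Matrix.trace_diagonal]
    apply Finset.sum_congr rfl
    intro i _
    exact (pow_two _).symm
  -- rewrite both sides in terms of w and μ
  have hlhs : ∑ i, (A.mulVec v i) ^ 2 = ∑ i, (μ i) ^ 2 * (w i) ^ 2 := by
    show ∑ i, (A *ᵥ v) i ^ 2 = _
    rw [hAv, hnorm]
    apply Finset.sum_congr rfl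
    intro i _
    ring
  have hrhs : ∑ i, (v i) ^ 2 = ∑ i, (w i) ^ 2 := by
    rw [← hv, hnorm]
  rw [hlhs, hrhs, htr, hfrob]
  -- conclude by the pointwise eigenvalue bound
  have hbound := fun k => kato_pointwise n hn μ t ht k
  calc (t + ↑n) / (t + ↑n - 1) * ∑ i, μ i ^ 2 * w i ^ 2
      = ∑ i, ((t + ↑n) / (t + ↑n - 1) * μ i ^ 2) * w i ^ 2 := by
        rw [Finset.mul_sum]; apply Finset.sum_congr rfl; intro i _; ring
    _ ≤ ∑ i, ((∑ j, μ j ^ 2) + (∑ j, μ j) ^ 2 / t) * w i ^ 2 := by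
        apply Finset.sum_le_sum
        intro i _
        exact mul_le_mul_of_nonneg_right (hbound i) (sq_nonneg _)
    _ = (∑ i, w i ^ 2) * ((∑ i, μ i ^ 2) + (∑ i, μ i) ^ 2 / t) := by
        rw [← Finset.mul_sum, mul_comm]
end

section
/- Let n ≥ 1 be an integer, let A be an n×n real symmetric matrix, let t > 0 be a real number and let v ∈ ℝⁿ with v ≠ 0. Then equality ((t+n)/(t+n−1))·‖A·v‖² = ‖v‖²·( ‖A‖_HS² + (tr A)²/t ) holds if and only if there exist a real number α and a unit vector e ∈ ℝⁿ such that A = α·(Iₙ − (t+n)·e·eᵀ) (i.e. A_{ij} = α(δ_{ij} − (t+n)e_i e_j) for all i,j) and v is a scalar multiple of e. -/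
/-!
Both sides are quadratic in `v`, so we may take `v = e` a unit vector; write `A e = r e + b`
with `b ⊥ e`. For `μ = (tr A - r) / (n - 1)` and `D = A - μ I - (r - μ) e eᵀ - e bᵀ - b eᵀ`,
the defect of the inequality is a sum of squares:

  (t + n - 1) · defect = (t + n - 2) ‖b‖² + (t + n - 1) ‖D‖²_HS + (n - 1) (r + (t + n - 1) μ)² / t.

For `n ≥ 2` all three coefficients are positive, so equality forces `b = 0`, `D = 0` and
`r = -(t + n - 1) μ`, which is exactly `A = μ (I - (t + n) e eᵀ)`; conversely such an `A` makes all
three terms vanish. For `n = 1` equality always holds and every `1 × 1` matrix has this form.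
-/

namespace Matrix

variable {m n R : Type*} [Fintype m] [Fintype n] [CommSemiring R]

theorem vec_dotProduct_vec_vecMulVec (A : Matrix m n R) (x : m → R) (y : n → R) :
    vec A ⬝ᵥ vec (vecMulVec x y) = x ⬝ᵥ A *ᵥ y := by
  rw [vec_dotProduct_vec, mul_vecMulVec, trace_vecMulVec, mulVec_transpose, dotProduct_mulVec]

theorem vec_vecMulVec_dotProduct_vec (A : Matrix m n R) (x : m → R) (y : n → R) :
    vec (vecMulVec x y) ⬝ᵥ vec A = x ⬝ᵥ A *ᵥ y := by
  rw [dotProduct_comm, vec_dotProduct_vec_vecMulVec]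

theorem vec_one_dotProduct_vec [DecidableEq n] (A : Matrix n n R) :
    vec (1 : Matrix n n R) ⬝ᵥ vec A = trace A := by
  rw [vec_dotProduct_vec, transpose_one, Matrix.one_mul]

theorem vec_dotProduct_vec_one [DecidableEq n] (A : Matrix n n R) :
    vec A ⬝ᵥ vec (1 : Matrix n n R) = trace A := by
  rw [dotProduct_comm, vec_one_dotProduct_vec]

end Matrix

open Matrix

section

variable {ι : Type*} [DecidableEq ι]

def katoRemainder (A : Matrix ι ι ℝ) (e b : ι → ℝ) (r μ : ℝ) : Matrix ι ι ℝ :=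
  A - μ • 1 - (r - μ) • vecMulVec e e - vecMulVec e b - vecMulVec b e

theorem katoRemainder_zero_eq_sub (A : Matrix ι ι ℝ) (e : ι → ℝ) (s μ : ℝ) :
    katoRemainder A e 0 (μ * (1 - s)) μ = A - μ • (1 - s • vecMulVec e e) := by
  simp only [katoRemainder, vecMulVec_zero, zero_vecMulVec, sub_zero]
  module

end

section

variable {ι : Type*} [Fintype ι]

theorem dotProduct_self_nonneg (v : ι → ℝ) : 0 ≤ v ⬝ᵥ v :=
  Finset.sum_nonneg fun i _ => mul_self_nonneg (v i)

theorem exists_eq_smul_unit_of_ne_zero {v : ι → ℝ} (hv : v ≠ 0) :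
    ∃ c : ℝ, c ≠ 0 ∧ ∃ e : ι → ℝ, e ⬝ᵥ e = 1 ∧ v = c • e := by
  have hpos : 0 < v ⬝ᵥ v := by simpa using dotProduct_star_self_pos_iff.2 hv
  have hc : √(v ⬝ᵥ v) ≠ 0 := (Real.sqrt_pos.2 hpos).ne'
  refine ⟨√(v ⬝ᵥ v), hc, (√(v ⬝ᵥ v))⁻¹ • v, ?_, (smul_inv_smul₀ hc v).symm⟩
  rw [smul_dotProduct, dotProduct_smul, smul_eq_mul, smul_eq_mul, ← mul_assoc, ← sq, inv_pow,
    Real.sq_sqrt hpos.le, inv_mul_cancel₀ hpos.ne']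

/-- Here `vec A ⬝ᵥ vec A` is the squared Hilbert–Schmidt norm `‖A‖²_HS`. -/
noncomputable def katoDefect (t : ℝ) (A : Matrix ι ι ℝ) (v : ι → ℝ) : ℝ :=
  (v ⬝ᵥ v) * (vec A ⬝ᵥ vec A + trace A ^ 2 / t) -
    (t + Fintype.card ι) / (t + Fintype.card ι - 1) * (A *ᵥ v ⬝ᵥ A *ᵥ v)

theorem katoDefect_smul (t : ℝ) (A : Matrix ι ι ℝ) (c : ℝ) (v : ι → ℝ) :
    katoDefect t A (c • v) = c ^ 2 * katoDefect t A v := by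
  simp only [katoDefect, mulVec_smul, smul_dotProduct, dotProduct_smul, smul_eq_mul]
  ring

variable [DecidableEq ι] {A : Matrix ι ι ℝ} {e b : ι → ℝ} {r : ℝ}

theorem vec_katoRemainder_dotProduct_self (hA : A.IsSymm) (he : e ⬝ᵥ e = 1) (hb : e ⬝ᵥ b = 0)
    (hAe : A *ᵥ e = r • e + b) (μ : ℝ) :
    vec (katoRemainder A e b r μ) ⬝ᵥ vec (katoRemainder A e b r μ) =
      vec A ⬝ᵥ vec A + Fintype.card ι * μ ^ 2 + (r - μ) ^ 2 - 2 * (b ⬝ᵥ b)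
        - 2 * μ * trace A - 2 * (r - μ) * r + 2 * μ * (r - μ) := by
  have heA : e ᵥ* A = r • e + b := by rw [← mulVec_transpose, hA.eq, hAe]
  have heAe : e ⬝ᵥ A *ᵥ e = r := by
    rw [hAe, dotProduct_add, dotProduct_smul, he, hb, smul_eq_mul, mul_one, add_zero]
  have heAb : e ⬝ᵥ A *ᵥ b = b ⬝ᵥ b := by
    rw [dotProduct_mulVec, heA, add_dotProduct, smul_dotProduct, hb, smul_zero, zero_add]
  have hbAe : b ⬝ᵥ A *ᵥ e = b ⬝ᵥ b := by
    rw [hAe, dotProduct_add, dotProduct_smul, dotProduct_comm b, hb, smul_zero, zero_add]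
  have hbe : b ⬝ᵥ e = 0 := by rw [dotProduct_comm, hb]
  simp only [katoRemainder, vec_sub, vec_smul, sub_dotProduct, dotProduct_sub, smul_dotProduct,
    dotProduct_smul, vec_one_dotProduct_vec, vec_dotProduct_vec_one, vec_dotProduct_vec_vecMulVec,
    vec_vecMulVec_dotProduct_vec, vecMulVec_mulVec, op_smul_eq_smul, trace_one, trace_vecMulVec,
    one_mulVec, heAe, heAb, hbAe, he, hb, hbe, smul_eq_mul]
  ring

theorem mul_katoDefect_eq (hA : A.IsSymm) (he : e ⬝ᵥ e = 1) (hb : e ⬝ᵥ b = 0)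
    (hAe : A *ᵥ e = r • e + b) {μ : ℝ} (hT : trace A = (Fintype.card ι - 1) * μ + r) {t : ℝ}
    (ht : t ≠ 0) (htn : t + Fintype.card ι - 1 ≠ 0) :
    (t + Fintype.card ι - 1) * katoDefect t A e =
      (t + Fintype.card ι - 2) * (b ⬝ᵥ b) +
        (t + Fintype.card ι - 1) *
          (vec (katoRemainder A e b r μ) ⬝ᵥ vec (katoRemainder A e b r μ)) +
        (Fintype.card ι - 1) * (r + (t + Fintype.card ι - 1) * μ) ^ 2 / t := by
  have hAe_sq : A *ᵥ e ⬝ᵥ A *ᵥ e = r ^ 2 + b ⬝ᵥ b := by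
    simp only [hAe, add_dotProduct, dotProduct_add, smul_dotProduct, dotProduct_smul, he, hb,
      dotProduct_comm b e, smul_eq_mul]
    ring
  rw [katoDefect, vec_katoRemainder_dotProduct_self hA he hb hAe, he, hAe_sq, hT]
  field_simp
  ring

theorem exists_eq_smul_one_sub_vecMulVec_of_katoDefect_eq_zero (hA : A.IsSymm)
    (he : e ⬝ᵥ e = 1) (hcard : 1 < Fintype.card ι) {t : ℝ} (ht : 0 < t)
    (h : katoDefect t A e = 0) :
    ∃ α : ℝ, A = α • (1 - (t + Fintype.card ι) • vecMulVec e e) := by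
  have hn : (2 : ℝ) ≤ Fintype.card ι := by exact_mod_cast hcard
  have hn1 : (Fintype.card ι : ℝ) - 1 ≠ 0 := by linarith
  set r := e ⬝ᵥ A *ᵥ e
  set b := A *ᵥ e - r • e
  set μ := (trace A - r) / (Fintype.card ι - 1)
  have hb : e ⬝ᵥ b = 0 := by
    simp only [b, dotProduct_sub, dotProduct_smul, he, smul_eq_mul, r]
    ring
  have hAe : A *ᵥ e = r • e + b := by
    simp only [b]
    abel
  have hT : trace A = (Fintype.card ι - 1) * μ + r := by
    simp only [μ]
    field_simp
    ring
  have key := mul_katoDefect_eq hA he hb hAe hT ht.ne' (by linarith)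
  rw [h, mul_zero] at key
  have h₁ : 0 ≤ (t + Fintype.card ι - 2) * (b ⬝ᵥ b) :=
    mul_nonneg (by linarith) (dotProduct_self_nonneg b)
  have h₂ : 0 ≤ (t + Fintype.card ι - 1) *
      (vec (katoRemainder A e b r μ) ⬝ᵥ vec (katoRemainder A e b r μ)) :=
    mul_nonneg (by linarith) (dotProduct_self_nonneg _)
  have h₃ : 0 ≤ (Fintype.card ι - 1) * (r + (t + Fintype.card ι - 1) * μ) ^ 2 / t := by
    have : (0 : ℝ) ≤ Fintype.card ι - 1 := by linarith
    positivity
  have hb0 : b = 0 := by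
    rw [← dotProduct_self_eq_zero]
    nlinarith
  have hD : katoRemainder A e b r μ = 0 := by
    rw [← vec_eq_zero_iff, ← dotProduct_self_eq_zero]
    nlinarith
  have hr : r = μ * (1 - (t + Fintype.card ι)) := by
    have h₃0 : (Fintype.card ι - 1) * (r + (t + Fintype.card ι - 1) * μ) ^ 2 / t = 0 := by
      linarith
    have : r + (t + Fintype.card ι - 1) * μ = 0 := by simpa [hn1, ht.ne'] using h₃0
    linarith
  rw [hb0, hr, katoRemainder_zero_eq_sub, sub_eq_zero] at hD
  exact ⟨μ, hD⟩

theorem katoDefect_smul_one_sub_vecMulVec (he : e ⬝ᵥ e = 1) {t : ℝ} (ht : t ≠ 0)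
    (htn : t + Fintype.card ι - 1 ≠ 0) (α : ℝ) :
    katoDefect t (α • (1 - (t + Fintype.card ι) • vecMulVec e e)) e = 0 := by
  set A := α • (1 - (t + Fintype.card ι) • vecMulVec e e)
  have hA : A.IsSymm := (isSymm_one.sub (IsSymm.smul (transpose_vecMulVec e e) _)).smul α
  have hAe : A *ᵥ e = (α * (1 - (t + Fintype.card ι))) • e + 0 := by
    simp only [A, smul_mulVec, sub_mulVec, one_mulVec, vecMulVec_mulVec, op_smul_eq_smul, he]
    module
  have hT : trace A = (Fintype.card ι - 1) * α + α * (1 - (t + Fintype.card ι)) := by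
    simp only [A, trace_smul, trace_sub, trace_one, trace_vecMulVec, he, smul_eq_mul]
    ring
  have key := mul_katoDefect_eq hA he (dotProduct_zero e) hAe hT ht htn
  rw [katoRemainder_zero_eq_sub, sub_self, vec_zero, dotProduct_zero, dotProduct_zero] at key
  refine (mul_eq_zero.1 ?_).resolve_left htn
  rw [key]
  ring

end

theorem eq_smul_one_sub_vecMulVec_of_unique {ι : Type*} [Unique ι] [DecidableEq ι]
    (A : Matrix ι ι ℝ) {t : ℝ} (ht : t ≠ 0) :
    A = (-A default default / t) • (1 - (t + 1) • vecMulVec 1 1) := by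
  ext i j
  rw [Subsingleton.elim i default, Subsingleton.elim j default]
  simp only [Matrix.smul_apply, Matrix.sub_apply, one_apply_eq, vecMulVec_apply, Pi.one_apply,
    smul_eq_mul]
  field_simp
  ring

/-- Equality case of the finite-dimensional core of the generalized refined Kato
inequality: for a symmetric `A`, `t > 0` and `v ≠ 0`, equality holds if and only if
`A = α (Id - (t+n) e ⊗ e)` for some `α ∈ ℝ` and some unit vector `e`, and `v` is a
scalar multiple of `e`. -/
theorem kato_matrix_equality (n : ℕ) (hn : 1 ≤ n)
    (A : Matrix (Fin n) (Fin n) ℝ) (hA : A.IsSymm)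
    (t : ℝ) (ht : 0 < t) (v : Fin n → ℝ) (hv : v ≠ 0) :
    ((t + n) / (t + n - 1)) * (∑ i, (A.mulVec v i) ^ 2) =
      (∑ i, (v i) ^ 2) * ((∑ i, ∑ j, (A i j) ^ 2) + (∑ i, A i i) ^ 2 / t) ↔
    ∃ (α : ℝ) (e : Fin n → ℝ), (∑ i, (e i) ^ 2) = 1 ∧
      A = α • ((1 : Matrix (Fin n) (Fin n) ℝ) - (t + n) • Matrix.vecMulVec e e) ∧
      ∃ c : ℝ, v = c • e := by
  have hsq (x : Fin n → ℝ) : ∑ i, x i ^ 2 = x ⬝ᵥ x := by simp only [dotProduct, sq]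
  have hfrob : ∑ i, ∑ j, A i j ^ 2 = vec A ⬝ᵥ vec A := by
    simp only [dotProduct, vec, Fintype.sum_prod_type, sq]
    exact Finset.sum_comm
  have hdefect : katoDefect t A v = v ⬝ᵥ v * (vec A ⬝ᵥ vec A + (∑ i, A i i) ^ 2 / t) -
      (t + n) / (t + n - 1) * (A *ᵥ v ⬝ᵥ A *ᵥ v) := by
    rw [katoDefect, Fintype.card_fin]
    rfl
  rw [hsq, hsq, hfrob, eq_comm, ← sub_eq_zero, ← hdefect]
  constructor
  · intro h
    obtain rfl | hn2 := hn.eq_or_lt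
    · refine ⟨-A 0 0 / t, 1, by simp, by simpa using eq_smul_one_sub_vecMulVec_of_unique A ht.ne',
        v 0, funext fun i => by simp [Subsingleton.elim i 0]⟩
    · obtain ⟨c, hc, e, he, rfl⟩ := exists_eq_smul_unit_of_ne_zero hv
      rw [katoDefect_smul, mul_eq_zero, or_iff_right (pow_ne_zero 2 hc)] at h
      obtain ⟨α, hα⟩ := exists_eq_smul_one_sub_vecMulVec_of_katoDefect_eq_zero hA he
        (by rwa [Fintype.card_fin]) ht h
      exact ⟨α, e, by rwa [hsq], by simpa using hα, c, rfl⟩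
  · rintro ⟨α, e, he, rfl, c, rfl⟩
    have htn : t + n - 1 ≠ 0 := by
      have : (1 : ℝ) ≤ n := by exact_mod_cast hn
      linarith
    have h := katoDefect_smul_one_sub_vecMulVec (by rwa [← hsq]) ht.ne'
      (by rwa [Fintype.card_fin]) α
    rw [Fintype.card_fin] at h
    rw [katoDefect_smul, h, mul_zero]
end

section
/- Let ψ : ℝ → ℝ be differentiable with ψ'(z) = 1 − ψ(z)² for every z ∈ ℝ. Then either ψ is identically equal to 1, or ψ is identically equal to −1, or there exists c ∈ ℝ such that ψ(z) = tanh(z + c) for every z ∈ ℝ. -/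
/-!
Writing `ψ = w'/w` with `w = exp Φ`, `Φ' = ψ`, linearizes the Riccati equation to `w'' = w`.
Concretely, `(1 + ψ) e^{Φ - z}` and `(1 - ψ) e^{Φ + z}` have zero derivative, so with
`A = 1 + ψ 0`, `B = 1 - ψ 0` one gets `ψ = (A e^z - B e^{-z}) / (A e^z + B e^{-z})`, where the
denominator `2 e^Φ` never vanishes. That forces `A, B ≥ 0`: `B = 0` gives `ψ = 1`, `A = 0` gives
`ψ = -1`, and otherwise `ψ` is a translate of `tanh`.
-/

open Real

theorem one_add_mul_mul_exp_eq_of_riccati {ψ Φ : ℝ → ℝ} {s : ℝ} (hs : s ^ 2 = 1)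
    (hψ : ∀ z, HasDerivAt ψ (1 - ψ z ^ 2) z) (hΦ : ∀ z, HasDerivAt Φ (ψ z) z)
    (hΦ0 : Φ 0 = 0) (z : ℝ) : (1 + s * ψ z) * exp (Φ z) = (1 + s * ψ 0) * exp (s * z) := by
  have hderiv (x : ℝ) : HasDerivAt (fun x ↦ (1 + s * ψ x) * exp (Φ x - s * x)) 0 x := by
    have hfactor : HasDerivAt (fun x ↦ 1 + s * ψ x) (s * (1 - ψ x ^ 2)) x :=
      ((hψ x).const_mul s).const_add 1
    have hexponent : HasDerivAt (fun x ↦ Φ x - s * x) (ψ x - s) x :=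
      (hΦ x).sub (by simpa using (hasDerivAt_id x).const_mul s)
    refine (hfactor.mul hexponent.exp).congr_deriv ?_
    linear_combination (-Real.exp (Φ x - s * x) * ψ x) * hs
  have hconst := is_const_of_deriv_eq_zero (f := fun x : ℝ ↦ (1 + s * ψ x) * exp (Φ x - s * x))
    (fun x ↦ (hderiv x).differentiableAt) (fun x ↦ (hderiv x).deriv) z 0
  simp only [hΦ0, mul_zero, sub_zero, exp_zero, mul_one] at hconst
  rw [← hconst, mul_assoc, ← exp_add, sub_add_cancel]

theorem riccati_eq_div {ψ : ℝ → ℝ} (hψ : ∀ z, HasDerivAt ψ (1 - ψ z ^ 2) z) (z : ℝ) :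
    0 < (1 + ψ 0) * exp z + (1 - ψ 0) * exp (-z) ∧
      ψ z = ((1 + ψ 0) * exp z - (1 - ψ 0) * exp (-z)) /
        ((1 + ψ 0) * exp z + (1 - ψ 0) * exp (-z)) := by
  have hcont : Continuous ψ := continuous_iff_continuousAt.2 fun z ↦ (hψ z).continuousAt
  set Φ : ℝ → ℝ := fun z ↦ ∫ t in (0 : ℝ)..z, ψ t
  have hΦ (z : ℝ) : HasDerivAt Φ (ψ z) z := (hcont.integral_hasStrictDerivAt 0 z).hasDerivAt
  have hΦ0 : Φ 0 = 0 := intervalIntegral.integral_same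
  have hplus : (1 + ψ z) * exp (Φ z) = (1 + ψ 0) * exp z := by
    simpa using one_add_mul_mul_exp_eq_of_riccati (one_pow 2) hψ hΦ hΦ0 z
  have hminus : (1 - ψ z) * exp (Φ z) = (1 - ψ 0) * exp (-z) := by
    simpa [← sub_eq_add_neg] using
      one_add_mul_mul_exp_eq_of_riccati (s := -1) (by norm_num) hψ hΦ hΦ0 z
  have hpos : 0 < (1 + ψ 0) * exp z + (1 - ψ 0) * exp (-z) := by
    rw [← hplus, ← hminus]; nlinarith [exp_pos (Φ z)]
  refine ⟨hpos, ?_⟩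
  rw [eq_div_iff hpos.ne', ← hplus, ← hminus]; ring

theorem nonneg_of_forall_mul_exp_add_mul_exp_neg_pos {A B : ℝ}
    (h : ∀ z, 0 < A * exp z + B * exp (-z)) : 0 ≤ A := by
  by_contra! hA
  have hB : 0 < B := by simpa using (h 0).trans_le (by simp; linarith)
  -- `A e^z + B e^{-z}` vanishes where `e^{2z} = -B / A`.
  set z := log (-B / A) / 2
  have hz : exp z * exp z = -B / A := by
    rw [← exp_add, add_halves, exp_log (div_pos_of_neg_of_neg (by linarith) hA)]
  have hzero : A * exp z + B * exp (-z) = 0 := by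
    have hfactor : A * exp z + B * exp (-z) = exp (-z) * (A * (exp z * exp z) + B) := by
      rw [exp_neg]; field_simp
    rw [hfactor, hz, mul_div_cancel₀ _ hA.ne, neg_add_cancel, mul_zero]
  exact (h z).ne' hzero

theorem mul_exp_sub_div_mul_exp_add_eq_tanh {A B : ℝ} (hA : 0 < A) (hB : 0 < B) (z : ℝ) :
    (A * exp z - B * exp (-z)) / (A * exp z + B * exp (-z)) =
      tanh (z + (log A - log B) / 2) := by
  set m := exp ((log A + log B) / 2)
  have hAz : A * exp z = m * exp (z + (log A - log B) / 2) := by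
    rw [← exp_add]; conv_lhs => rw [← exp_log hA, ← exp_add]
    ring_nf
  have hBz : B * exp (-z) = m * exp (-(z + (log A - log B) / 2)) := by
    rw [← exp_add]; conv_lhs => rw [← exp_log hB, ← exp_add]
    ring_nf
  rw [hAz, hBz, ← mul_sub, ← mul_add, mul_div_mul_left _ _ (exp_pos _).ne', tanh_eq]

/-- Classification of global solutions of the ODE `ψ' = 1 - ψ²`: any differentiable
`ψ : ℝ → ℝ` satisfying it is identically `1`, identically `-1`, or a translate of `tanh`. -/
theorem ode_tanh_classification (ψ : ℝ → ℝ) (hdiff : Differentiable ℝ ψ)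
    (hode : ∀ z : ℝ, deriv ψ z = 1 - (ψ z) ^ 2) :
    (∀ z : ℝ, ψ z = 1) ∨ (∀ z : ℝ, ψ z = -1) ∨
      ∃ c : ℝ, ∀ z : ℝ, ψ z = Real.tanh (z + c) := by
  have hψ (z : ℝ) : HasDerivAt ψ (1 - ψ z ^ 2) z := hode z ▸ (hdiff z).hasDerivAt
  have hsol := riccati_eq_div hψ
  set A := 1 + ψ 0
  set B := 1 - ψ 0
  have hA : 0 ≤ A := nonneg_of_forall_mul_exp_add_mul_exp_neg_pos fun z ↦ (hsol z).1
  have hB : 0 ≤ B := nonneg_of_forall_mul_exp_add_mul_exp_neg_pos fun z ↦ by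
    simpa [add_comm] using (hsol (-z)).1
  rcases hB.eq_or_lt with hB | hB
  · refine Or.inl fun z ↦ ?_
    obtain ⟨hpos, hψz⟩ := hsol z
    rw [← hB, zero_mul, add_zero] at hpos
    rw [hψz, ← hB, zero_mul, sub_zero, add_zero, div_self hpos.ne']
  rcases hA.eq_or_lt with hA | hA
  · refine Or.inr (Or.inl fun z ↦ ?_)
    obtain ⟨hpos, hψz⟩ := hsol z
    rw [← hA, zero_mul, zero_add] at hpos
    rw [hψz, ← hA, zero_mul, zero_sub, zero_add, neg_div, div_self hpos.ne']
  · exact Or.inr (Or.inr ⟨(log A - log B) / 2, fun z ↦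
      (hsol z).2.trans (mul_exp_sub_div_mul_exp_add_eq_tanh hA hB z)⟩)
end

section
/- Let w : ℝ → ℝ be continuous with w(z) > 0 for every z, and let μ be a locally finite Borel measure on ℝ such that for every t ∈ ℝ the pushforward of μ under the translation z ↦ z + t equals the measure with density z ↦ w(z − t)/w(z) with respect to μ. Then there exists a constant c ≥ 0 such that μ equals the measure with density z ↦ c·w(z) with respect to the Lebesgue measure on ℝ. -/
open MeasureTheory

/-- Measure rigidity: if `μ` is a locally finite Borel measure on `ℝ` such that for every
`t` the pushforward of `μ` under the translation `z ↦ z + t` equals the measure with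
density `z ↦ w(z-t)/w(z)` with respect to `μ`, then `μ = c · w · L¹` for some `c ≥ 0`. -/
theorem measure_translation_rigidity (w : ℝ → ℝ) (hw : Continuous w)
    (hwpos : ∀ z : ℝ, 0 < w z)
    (μ : Measure ℝ) [IsLocallyFiniteMeasure μ]
    (h : ∀ t : ℝ, Measure.map (fun z => z + t) μ =
      μ.withDensity (fun z => ENNReal.ofReal (w (z - t) / w z))) :
    ∃ c : ℝ, 0 ≤ c ∧
      μ = (volume : Measure ℝ).withDensity (fun z => ENNReal.ofReal (c * w z)) := by
  set g : ℝ → ENNReal := fun z => ENNReal.ofReal (w z)⁻¹ with hg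
  have hgm : Measurable g := ENNReal.measurable_ofReal.comp (hw.measurable.inv)
  have hwm : Measurable fun z : ℝ => ENNReal.ofReal (w z) :=
    ENNReal.measurable_ofReal.comp hw.measurable
  set ν := μ.withDensity g with hν
  -- translation invariance of ν
  have hmap : ∀ t : ℝ, Measure.map (fun z => z + t) ν = ν := by
    intro t
    have hgs : Measurable fun z : ℝ => g (z - t) := hgm.comp (measurable_sub_const t)
    have hft : Measurable fun z : ℝ => ENNReal.ofReal (w (z - t) / w z) :=
      ENNReal.measurable_ofReal.comp
        ((hw.measurable.comp (measurable_sub_const t)).div hw.measurable)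
    have key : Measure.map (fun z => z + t) ν =
        (Measure.map (fun z => z + t) μ).withDensity (fun z => g (z - t)) := by
      ext s hs
      rw [Measure.map_apply (measurable_add_const t) hs, withDensity_apply _ hs,
        withDensity_apply _ ((measurable_add_const t) hs),
        setLIntegral_map hs hgs (measurable_add_const t)]
      simp
    rw [key, h t, ← withDensity_mul _ hft hgs]
    congr 1
    funext z
    simp only [Pi.mul_apply, g]
    rw [← ENNReal.ofReal_mul (div_nonneg (hwpos _).le (hwpos _).le)]
    congr 1
    have h1 : w (z - t) ≠ 0 := (hwpos _).ne'
    have h2 : w z ≠ 0 := (hwpos _).ne'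
    field_simp
  haveI hinv : Measure.IsAddLeftInvariant ν := by
    constructor
    intro t
    have : (fun z : ℝ => t + z) = (fun z : ℝ => z + t) := by funext z; ring
    rw [this, hmap t]
  haveI hfc : IsFiniteMeasureOnCompacts ν := by
    constructor
    intro K hK
    obtain ⟨C, hC⟩ := hK.exists_bound_of_continuousOn
      ((hw.inv₀ (fun z => (hwpos z).ne')).continuousOn)
    have hb : ν K ≤ ENNReal.ofReal C * μ K := by
      rw [hν, withDensity_apply' _ K]
      calc ∫⁻ z in K, g z ∂μ ≤ ∫⁻ _ in K, ENNReal.ofReal C ∂μ := by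
            apply setLIntegral_mono_ae (by measurability)
            filter_upwards with z hz
            exact ENNReal.ofReal_le_ofReal ((le_abs_self _).trans (hC z hz))
        _ = ENNReal.ofReal C * μ K := by simp [Measure.restrict_apply_univ]
    exact lt_of_le_of_lt hb (ENNReal.mul_lt_top ENNReal.ofReal_lt_top hK.measure_lt_top)
  have hsm := Measure.isAddLeftInvariant_eq_smul ν (volume : Measure ℝ)
  set c : NNReal := Measure.addHaarScalarFactor ν (volume : Measure ℝ) with hc
  refine ⟨c, c.coe_nonneg, ?_⟩
  have hμν : μ = ν.withDensity (fun z => ENNReal.ofReal (w z)) := by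
    rw [hν, ← withDensity_mul _ hgm hwm]
    have h1 : (g * fun z => ENNReal.ofReal (w z)) = fun _ => 1 := by
      funext z
      simp only [Pi.mul_apply, g]
      rw [← ENNReal.ofReal_mul (inv_nonneg.mpr (hwpos z).le),
        inv_mul_cancel₀ (hwpos z).ne']
      simp
    rw [h1]
    exact (withDensity_one (μ := μ)).symm
  have hcoef : (fun z : ℝ => ENNReal.ofReal ((c : ℝ) * w z)) =
      (c : ENNReal) • fun z : ℝ => ENNReal.ofReal (w z) := by
    funext z
    simp only [Pi.smul_apply, smul_eq_mul]
    rw [ENNReal.ofReal_mul c.coe_nonneg, ENNReal.ofReal_coe_nnreal]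
  calc μ = ν.withDensity (fun z => ENNReal.ofReal (w z)) := hμν
    _ = ((c : ENNReal) • volume).withDensity (fun z => ENNReal.ofReal (w z)) := by
        rw [hsm, ENNReal.smul_def]
    _ = (c : ENNReal) • volume.withDensity (fun z => ENNReal.ofReal (w z)) :=
        withDensity_smul_measure _ _
    _ = volume.withDensity (fun z => ENNReal.ofReal ((c : ℝ) * w z)) := by
        rw [hcoef, withDensity_smul _ hwm]
end

section
/- Let F : ℝ → ℝ be nondecreasing, let a ≥ 0, t > 0, C ≥ 0 and C' ≥ 0 be real numbers, and assume that: (i) F(R) − F(R − t) ≤ C + (1/3)·(F(R + t) − F(R)) for every R ≥ a; and (ii) F(R) ≤ C'·(1 + R) for every R ≥ a. Then F(R) − F(R − t) ≤ (3/2)·C for every R ≥ a. -/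
/-- Geometric-iteration lemma: if a nondecreasing `F` satisfies
`F(R) - F(R-t) ≤ C + (1/3)(F(R+t) - F(R))` and grows at most linearly for `R ≥ a`,
then `F(R) - F(R-t) ≤ (3/2) C` for every `R ≥ a`. -/
theorem geometric_iteration (F : ℝ → ℝ) (hF : Monotone F) (a t C C' : ℝ)
    (ha : 0 ≤ a) (ht : 0 < t) (hC : 0 ≤ C) (hC' : 0 ≤ C')
    (h1 : ∀ R : ℝ, a ≤ R → F R - F (R - t) ≤ C + (1 / 3) * (F (R + t) - F R))
    (h2 : ∀ R : ℝ, a ≤ R → F R ≤ C' * (1 + R)) :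
    ∀ R : ℝ, a ≤ R → F R - F (R - t) ≤ (3 / 2) * C := by
  intro R hR
  set D : ℕ → ℝ := fun k => F (R + k * t) - F (R + k * t - t) with hD
  have hRk : ∀ k : ℕ, a ≤ R + k * t := by
    intro k
    have : (0:ℝ) ≤ k * t := mul_nonneg (Nat.cast_nonneg k) ht.le
    linarith
  have key : ∀ k : ℕ, D 0 ≤ C * ∑ i ∈ Finset.range k, (1/3:ℝ)^i + (1/3)^k * D k := by
    intro k
    induction k with
    | zero => simp
    | succ k ih =>
      have hstep : D k ≤ C + (1/3) * D (k+1) := by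
        have := h1 (R + k * t) (hRk k)
        have e : R + k * t + t = R + (k+1 : ℕ) * t := by push_cast; ring
        have e2 : R + (k+1 : ℕ) * t - t = R + k * t := by push_cast; ring
        simp only [hD, e, e2] at this ⊢
        linarith
      calc D 0 ≤ C * ∑ i ∈ Finset.range k, (1/3:ℝ)^i + (1/3)^k * D k := ih
      _ ≤ C * ∑ i ∈ Finset.range k, (1/3:ℝ)^i + (1/3)^k * (C + (1/3) * D (k+1)) := by
          have : (0:ℝ) < (1/3)^k := by positivity
          nlinarith [hstep]
      _ = C * ∑ i ∈ Finset.range (k+1), (1/3:ℝ)^i + (1/3)^(k+1) * D (k+1) := by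
          rw [Finset.sum_range_succ]; ring
  have hbound : ∀ k : ℕ, D k ≤ C' * (1 + R + k * t) - F (R - t) := by
    intro k
    have h2' := h2 (R + k * t) (hRk k)
    have hmono : F (R - t) ≤ F (R + k * t - t) := by
      apply hF
      have : (0:ℝ) ≤ k * t := mul_nonneg (Nat.cast_nonneg k) ht.le
      linarith
    simp only [hD]
    linarith
  have key2 : ∀ k : ℕ, D 0 ≤ C * ∑ i ∈ Finset.range k, (1/3:ℝ)^i
      + (1/3)^k * (C' * (1 + R + k * t) - F (R - t)) := by
    intro k
    have := key k
    have hp : (0:ℝ) ≤ (1/3)^k := by positivity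
    have := mul_le_mul_of_nonneg_left (hbound k) hp
    linarith
  -- take the limit
  have hsum : Filter.Tendsto (fun k => ∑ i ∈ Finset.range k, (1/3:ℝ)^i)
      Filter.atTop (nhds (3/2)) := by
    have := (hasSum_geometric_of_lt_one (by norm_num : (0:ℝ) ≤ 1/3)
      (by norm_num : (1/3:ℝ) < 1)).tendsto_sum_nat
    convert this using 2
    norm_num
  have hgeo : Filter.Tendsto (fun k : ℕ => ((1:ℝ)/3)^k) Filter.atTop (nhds 0) :=
    tendsto_pow_atTop_nhds_zero_of_lt_one (by norm_num) (by norm_num)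
  have hnr : Filter.Tendsto (fun k : ℕ => (k:ℝ) * (1/3)^k) Filter.atTop (nhds 0) :=
    tendsto_self_mul_const_pow_of_lt_one (by norm_num) (by norm_num)
  have htail : Filter.Tendsto
      (fun k : ℕ => ((1:ℝ)/3)^k * (C' * (1 + R + k * t) - F (R - t)))
      Filter.atTop (nhds 0) := by
    have h0 : Filter.Tendsto
        (fun k : ℕ => ((1:ℝ)/3)^k * (C' * (1 + R) - F (R - t)) + (k:ℝ) * (1/3)^k * (C' * t))
        Filter.atTop (nhds 0) := by
      have := (hgeo.mul_const (C' * (1 + R) - F (R - t))).add (hnr.mul_const (C' * t))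
      simpa using this
    convert h0 using 2 with k
    ring
  have hlim : Filter.Tendsto
      (fun k : ℕ => C * ∑ i ∈ Finset.range k, (1/3:ℝ)^i
        + (1/3)^k * (C' * (1 + R + k * t) - F (R - t)))
      Filter.atTop (nhds ((3/2) * C)) := by
    have := (hsum.const_mul C).add htail
    simpa [mul_comm] using this
  have hD0 : D 0 = F R - F (R - t) := by simp [hD]
  have := ge_of_tendsto' hlim (fun k => key2 k)
  rw [hD0] at this
  exact this
end

section
/- Let F : ℝ → ℝ be nondecreasing, let a ∈ ℝ, q > 1, A ≥ 0, C ≥ 0 and α ∈ ℝ with α < log q, and assume that: (i) F(R) − F(a) ≤ A·R² + (1/q)·(F(R + 1) − F(a)) for every R ≥ a; and (ii) F(R) − F(a) ≤ C·e^{αR} for every R ≥ a. Then there exists a constant C'' ≥ 0 such that F(R) ≤ C''·R² for every R ≥ max(a, 1). -/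
open Finset

lemma esi_summable {q : ℝ} (hq : 1 < q) :
    Summable (fun i : ℕ => ((i : ℝ) + 1) ^ 2 * (1 / q) ^ i) := by
  have hr : ‖(1 / q : ℝ)‖ < 1 := by
    rw [Real.norm_eq_abs, abs_of_pos (by positivity)]
    rw [div_lt_one (by linarith)]; linarith
  have h2 := summable_pow_mul_geometric_of_norm_lt_one (R := ℝ) 2 hr
  have h1 := summable_pow_mul_geometric_of_norm_lt_one (R := ℝ) 1 hr
  have h0 := summable_pow_mul_geometric_of_norm_lt_one (R := ℝ) 0 hr
  have := (h2.add ((h1.mul_left 2).add h0))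
  refine this.congr fun i => ?_
  ring

/-- Iteration-with-exponential-suppression lemma: if a nondecreasing `F` satisfies
`F(R) - F(a) ≤ A R² + (1/q)(F(R+1) - F(a))` and `F(R) - F(a) ≤ C e^{αR}` for `R ≥ a`,
with `q > 1` and `α < log q`, then `F(R) ≤ C'' R²` for `R ≥ max(a,1)`. -/
theorem exponential_suppression_iteration (F : ℝ → ℝ) (hF : Monotone F)
    (a q A C α : ℝ) (hq : 1 < q) (hA : 0 ≤ A) (hC : 0 ≤ C) (hα : α < Real.log q)
    (h1 : ∀ R : ℝ, a ≤ R → F R - F a ≤ A * R ^ 2 + (1 / q) * (F (R + 1) - F a))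
    (h2 : ∀ R : ℝ, a ≤ R → F R - F a ≤ C * Real.exp (α * R)) :
    ∃ C'' : ℝ, 0 ≤ C'' ∧ ∀ R : ℝ, max a 1 ≤ R → F R ≤ C'' * R ^ 2 := by
  have hq0 : 0 < q := by linarith
  have hsumm := esi_summable hq
  set S : ℝ := ∑' i : ℕ, ((i : ℝ) + 1) ^ 2 * (1 / q) ^ i with hS
  have hS0 : 0 ≤ S := tsum_nonneg fun i => by positivity
  -- iteration
  have key : ∀ k : ℕ, ∀ R : ℝ, max a 1 ≤ R →
      F R - F a ≤ A * (∑ i ∈ Finset.range k, (1 / q) ^ i * (R + i) ^ 2)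
        + (1 / q) ^ k * (F (R + k) - F a) := by
    intro k
    induction k with
    | zero => intro R hR; simp
    | succ k ih =>
      intro R hR
      have haR : a ≤ R := le_trans (le_max_left _ _) hR
      have h1R := h1 R haR
      have hR1 : max a 1 ≤ R + 1 := le_trans hR (by linarith)
      have ihR := ih (R + 1) hR1
      have hqk : (0:ℝ) ≤ (1 / q) := by positivity
      have := mul_le_mul_of_nonneg_left ihR hqk
      have hsum : A * R ^ 2 + (1 / q) * (A * (∑ i ∈ Finset.range k, (1 / q) ^ i * (R + 1 + i) ^ 2)
            + (1 / q) ^ k * (F (R + 1 + k) - F a))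
          = A * (∑ i ∈ Finset.range (k + 1), (1 / q) ^ i * (R + i) ^ 2)
            + (1 / q) ^ (k + 1) * (F (R + (k + 1 : ℕ)) - F a) := by
        rw [Finset.sum_range_succ' (fun i => (1 / q) ^ i * (R + i) ^ 2) k]
        push_cast
        have hswap : (∑ i ∈ Finset.range k, (1 / q) ^ (i + 1) * (R + ((i:ℝ) + 1)) ^ 2)
            = (1 / q) * ∑ i ∈ Finset.range k, (1 / q) ^ i * (R + 1 + (i:ℝ)) ^ 2 := by
          rw [Finset.mul_sum]
          exact Finset.sum_congr rfl fun i _ => by ring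
        rw [hswap, show R + ((k:ℝ) + 1) = R + 1 + (k:ℝ) by ring]
        ring
      calc F R - F a ≤ A * R ^ 2 + (1 / q) * (F (R + 1) - F a) := h1R
        _ ≤ A * R ^ 2 + (1 / q) * (A * (∑ i ∈ Finset.range k, (1 / q) ^ i * (R + 1 + i) ^ 2)
            + (1 / q) ^ k * (F (R + 1 + k) - F a)) := by linarith
        _ = _ := hsum
  -- per-k bound with explicit tail
  have key2 : ∀ R : ℝ, max a 1 ≤ R → ∀ k : ℕ,
      F R - F a ≤ A * S * R ^ 2 + C * Real.exp (α * R) * (Real.exp α / q) ^ k := by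
    intro R hR k
    have haR : a ≤ R := le_trans (le_max_left _ _) hR
    have h1R : (1:ℝ) ≤ R := le_trans (le_max_right _ _) hR
    have hsum_le : (∑ i ∈ Finset.range k, (1 / q) ^ i * (R + i) ^ 2) ≤ S * R ^ 2 := by
      have step : ∀ i ∈ Finset.range k,
          (1 / q) ^ i * (R + i) ^ 2 ≤ (((i:ℝ) + 1) ^ 2 * (1 / q) ^ i) * R ^ 2 := by
        intro i _
        have h1 : R + (i:ℝ) ≤ ((i:ℝ) + 1) * R := by nlinarith [Nat.cast_nonneg (α := ℝ) i]
        have h2 : (R + (i:ℝ)) ^ 2 ≤ (((i:ℝ) + 1) * R) ^ 2 := by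
          apply pow_le_pow_left₀ (by positivity) h1
        calc (1 / q) ^ i * (R + i) ^ 2 ≤ (1 / q) ^ i * (((i:ℝ) + 1) * R) ^ 2 := by
              apply mul_le_mul_of_nonneg_left h2 (by positivity)
          _ = (((i:ℝ) + 1) ^ 2 * (1 / q) ^ i) * R ^ 2 := by ring
      calc (∑ i ∈ Finset.range k, (1 / q) ^ i * (R + i) ^ 2)
          ≤ ∑ i ∈ Finset.range k, (((i:ℝ) + 1) ^ 2 * (1 / q) ^ i) * R ^ 2 :=
            Finset.sum_le_sum step
        _ = (∑ i ∈ Finset.range k, ((i:ℝ) + 1) ^ 2 * (1 / q) ^ i) * R ^ 2 := by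
            rw [Finset.sum_mul]
        _ ≤ S * R ^ 2 := by
            apply mul_le_mul_of_nonneg_right _ (by positivity)
            exact Summable.sum_le_tsum _ (fun i _ => by positivity) hsumm
    have htail : (1 / q) ^ k * (F (R + k) - F a)
        ≤ C * Real.exp (α * R) * (Real.exp α / q) ^ k := by
      have h2k : F (R + k) - F a ≤ C * Real.exp (α * (R + k)) :=
        h2 (R + k) (le_trans haR (le_add_of_nonneg_right (Nat.cast_nonneg k)))
      calc (1 / q) ^ k * (F (R + k) - F a) ≤ (1 / q) ^ k * (C * Real.exp (α * (R + k))) := by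
            apply mul_le_mul_of_nonneg_left h2k (by positivity)
        _ = C * Real.exp (α * R) * (Real.exp α / q) ^ k := by
            rw [mul_add, Real.exp_add, mul_comm α (k:ℝ), Real.exp_nat_mul, div_pow, div_pow]
            field_simp
            ring
    calc F R - F a ≤ A * (∑ i ∈ Finset.range k, (1 / q) ^ i * (R + i) ^ 2)
          + (1 / q) ^ k * (F (R + k) - F a) := key k R hR
      _ ≤ A * (S * R ^ 2) + C * Real.exp (α * R) * (Real.exp α / q) ^ k := by
          have := mul_le_mul_of_nonneg_left hsum_le hA
          linarith
      _ = A * S * R ^ 2 + C * Real.exp (α * R) * (Real.exp α / q) ^ k := by ring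
  -- take the limit k → ∞
  have main : ∀ R : ℝ, max a 1 ≤ R → F R - F a ≤ A * S * R ^ 2 := by
    intro R hR
    have hratio : |Real.exp α / q| < 1 := by
      rw [abs_of_pos (by positivity), div_lt_one hq0]
      calc Real.exp α < Real.exp (Real.log q) := Real.exp_lt_exp.mpr hα
        _ = q := Real.exp_log hq0
    have hlim : Filter.Tendsto (fun k : ℕ =>
        A * S * R ^ 2 + C * Real.exp (α * R) * (Real.exp α / q) ^ k)
        Filter.atTop (nhds (A * S * R ^ 2)) := by
      have h0 : Filter.Tendsto (fun k : ℕ => (Real.exp α / q) ^ k) Filter.atTop (nhds 0) :=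
        tendsto_pow_atTop_nhds_zero_of_abs_lt_one hratio
      have := (h0.const_mul (C * Real.exp (α * R))).const_add (A * S * R ^ 2)
      simpa using this
    exact ge_of_tendsto hlim (Filter.Eventually.of_forall (key2 R hR))
  refine ⟨A * S + |F a|, by positivity, fun R hR => ?_⟩
  have h1R : (1:ℝ) ≤ R := le_trans (le_max_right _ _) hR
  have hR2 : (1:ℝ) ≤ R ^ 2 := by nlinarith
  have hFa : F a ≤ |F a| * R ^ 2 := by
    calc F a ≤ |F a| := le_abs_self _
      _ ≤ |F a| * R ^ 2 := le_mul_of_one_le_right (abs_nonneg _) hR2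
  have := main R hR
  calc F R = (F R - F a) + F a := by ring
    _ ≤ A * S * R ^ 2 + |F a| * R ^ 2 := by linarith
    _ = (A * S + |F a|) * R ^ 2 := by ring
end

section
/- Let (X, d) be a metric space, let K ⊆ K' be compact subsets of X, and let E be an end of X with respect to K. Then E \ K' has exactly one unbounded connected component E', and E' is an end of X with respect to K'. -/
/-- `E` is an unbounded connected component of the set `s` in the metric space `X`. -/
def IsUnbddConnComp {X : Type*} [MetricSpace X] (s E : Set X) : Prop :=
  (∃ x ∈ s, E = connectedComponentIn s x) ∧ ¬ Bornology.IsBounded E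

/-- `E` is an end of the metric space `X` with respect to the compact set `K`:
`E` is an unbounded connected component of `X \ K` and for every compact `K' ⊇ K`
the set `E \ K'` has exactly one unbounded connected component. -/
def IsEnd {X : Type*} [MetricSpace X] (K E : Set X) : Prop :=
  IsUnbddConnComp Kᶜ E ∧
    ∀ K' : Set X, IsCompact K' → K ⊆ K' →
      ∃! E' : Set X, IsUnbddConnComp (E \ K') E'

/-- Auxiliary: if the component of `x` in `B` lies in `A ⊆ B`, it equals the component in `A`. -/
lemma ccIn_eq_of_subset {X : Type*} [TopologicalSpace X] {A B : Set X} {x : X}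
    (hx : x ∈ A) (hAB : A ⊆ B) (h : connectedComponentIn B x ⊆ A) :
    connectedComponentIn A x = connectedComponentIn B x :=
  subset_antisymm (connectedComponentIn_mono x hAB)
    (isPreconnected_connectedComponentIn.subset_connectedComponentIn
      (mem_connectedComponentIn (hAB hx)) h)

/-- If `E` is an end with respect to `K` and `K' ⊇ K` is compact, then `E \ K'` has
exactly one unbounded connected component `E'`, and `E'` is an end with respect to `K'`. -/
theorem end_restriction {X : Type*} [MetricSpace X] (K K' : Set X)
    (hK : IsCompact K) (hK' : IsCompact K') (hKK' : K ⊆ K')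
    (E : Set X) (hE : IsEnd K E) :
    ∃ E' : Set X, IsUnbddConnComp (E \ K') E' ∧ IsEnd K' E' ∧
      ∀ E'' : Set X, IsUnbddConnComp (E \ K') E'' → E'' = E' := by
  obtain ⟨⟨⟨x₀, hx₀, hEeq⟩, hEub⟩, hEnd⟩ := hE
  obtain ⟨E', hE', hEu⟩ := hEnd K' hK' hKK'
  -- Fact A: components of `E \ K'` agree with components of `K'ᶜ`
  have factA : ∀ x ∈ E \ K', connectedComponentIn (E \ K') x = connectedComponentIn K'ᶜ x := by
    intro x hx
    refine ccIn_eq_of_subset hx (fun y hy => hy.2) ?_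
    refine Set.subset_diff.2 ⟨?_, Set.disjoint_left.2
      fun y hy => (connectedComponentIn_subset _ _ hy)⟩
    have hxE : connectedComponentIn Kᶜ x = E := by
      rw [hEeq] at hx ⊢
      exact (connectedComponentIn_eq hx.1).symm
    rw [← hxE]
    exact connectedComponentIn_mono x (Set.compl_subset_compl.2 hKK')
  refine ⟨E', hE', ⟨?_, ?_⟩, hEu⟩
  · -- E' is an unbounded connected component of K'ᶜ
    obtain ⟨⟨x, hx, hx'⟩, hub⟩ := hE'
    exact ⟨⟨x, hx.2, hx'.trans (factA x hx)⟩, hub⟩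
  · intro K'' hK'' hK'K''
    obtain ⟨F, hF, hFu⟩ := hEnd K'' hK'' (hKK'.trans hK'K'')
    have hE'sub : E' ⊆ E \ K' := by
      obtain ⟨⟨x, hx, hx'⟩, _⟩ := hE'
      exact hx' ▸ connectedComponentIn_subset _ _
    have hEKsub : E \ K'' ⊆ E \ K' := Set.diff_subset_diff_right hK'K''
    -- Fact B: components of `E' \ K''` agree with components of `E \ K''`
    have factB : ∀ x ∈ E' \ K'',
        connectedComponentIn (E' \ K'') x = connectedComponentIn (E \ K'') x := by
      intro x hx
      refine ccIn_eq_of_subset hx (Set.diff_subset_diff_left (hE'sub.trans Set.diff_subset)) ?_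
      refine Set.subset_diff.2 ⟨?_, Set.disjoint_left.2
        fun y hy => ((connectedComponentIn_subset _ _) hy).2⟩
      have hxE' : connectedComponentIn (E \ K') x = E' := by
        obtain ⟨⟨z, hz, hz'⟩, _⟩ := hE'
        rw [hz'] at hx ⊢
        exact (connectedComponentIn_eq hx.1).symm
      rw [← hxE']
      exact (connectedComponentIn_mono x hEKsub)
    -- F lies inside E'
    obtain ⟨⟨y, hy, hFeq⟩, hFub⟩ := hF
    have hyK' : y ∈ E \ K' := hEKsub hy
    have hGE' : connectedComponentIn (E \ K') y = E' := by
      refine hEu _ ⟨⟨y, hyK', rfl⟩, fun hb => hFub (hb.subset ?_)⟩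
      rw [hFeq]
      exact connectedComponentIn_mono y hEKsub
    have hyE' : y ∈ E' \ K'' :=
      ⟨hGE' ▸ mem_connectedComponentIn hyK', hy.2⟩
    refine ⟨F, ⟨⟨y, hyE', hFeq.trans (factB y hyE').symm⟩, hFub⟩, ?_⟩
    rintro G ⟨⟨z, hz, hGeq⟩, hGub⟩
    refine hFu G ⟨⟨z, ⟨(hE'sub hz.1).1, hz.2⟩, hGeq.trans (factB z hz)⟩, hGub⟩
end

section
/- Let (X', d') be a nonempty, connected, noncompact metric space, and equip X := ℝ × X' with the sup product metric dist((s, x), (t, y)) = max(|s − t|, d'(x, y)). Then for every compact set K ⊆ X, the complement X \ K has exactly one unbounded connected component; in particular, for every compact K ⊆ X there is exactly one end of X with respect to K. -/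
open Set Bornology Metric

section Aux
variable {X' : Type*} [MetricSpace X'] [Nonempty X'] [ConnectedSpace X'] [NoncompactSpace X']

lemma aux_univ_unbounded : ¬ IsBounded (univ : Set (ℝ × X')) := by
  intro h
  obtain ⟨C, hC⟩ := Metric.isBounded_iff.mp h
  obtain ⟨x₀⟩ := ‹Nonempty X'›
  have h1 := hC (x := ((0:ℝ), x₀)) (mem_univ _) (y := ((|C|+1 : ℝ), x₀)) (mem_univ _)
  rw [Prod.dist_eq] at h1
  have h2 : dist (0:ℝ) (|C|+1) = |C|+1 := by
    rw [Real.dist_eq]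
    rw [abs_of_nonpos (by linarith [abs_nonneg C] : (0:ℝ) - (|C|+1) ≤ 0)]
    ring
  rw [h2] at h1
  have := le_max_left (|C|+1) (dist x₀ x₀)
  have h3 : |C| + 1 ≤ C := le_trans this h1
  have := le_abs_self C
  linarith

lemma aux_exists_box (K : Set (ℝ × X')) (hK : IsCompact K) :
    ∃ B : Set (ℝ × X'), IsCompact B ∧ K ⊆ B ∧ IsConnected Bᶜ := by
  obtain ⟨x₀⟩ := ‹Nonempty X'›
  set K₂ : Set X' := insert x₀ (Prod.snd '' K) with hK₂def
  have hK₂ : IsCompact K₂ := (hK.image continuous_snd).insert x₀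
  obtain ⟨x₁, hx₁⟩ := (Set.ne_univ_iff_exists_notMem _).mp hK₂.ne_univ
  obtain ⟨r, hr⟩ := (hK.image continuous_fst).isBounded.subset_closedBall 0
  set R := max r 0 with hRdef
  have hR : Prod.fst '' K ⊆ Icc (-R) R := by
    intro s hs
    have h1 := hr hs
    rw [Real.closedBall_eq_Icc] at h1
    have hrR : r ≤ R := le_max_left r 0
    constructor
    · have := h1.1; simp at this; linarith
    · have := h1.2; simp at this; linarith
  have hR1 : (R + 1 : ℝ) ∉ Icc (-R) R := by
    simp only [mem_Icc]; push_neg; intro _; linarith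
  refine ⟨Icc (-R) R ×ˢ K₂, isCompact_Icc.prod hK₂, ?_, ?_⟩
  · intro p hp
    exact ⟨hR ⟨p, hp, rfl⟩, Or.inr ⟨p, hp, rfl⟩⟩
  · set a : ℝ × X' := (R + 1, x₁) with hadef
    have ha : a ∈ (Icc (-R) R ×ˢ K₂)ᶜ := fun h => hx₁ h.2
    refine ⟨⟨a, ha⟩, isPreconnected_of_forall a ?_⟩
    rintro ⟨s, x⟩ hy
    have hy' : s ∉ Icc (-R) R ∨ x ∉ K₂ := by
      by_contra h
      push_neg at h
      exact hy ⟨h.1, h.2⟩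
    rcases hy' with hs | hx
    · refine ⟨({s} ×ˢ univ) ∪ (univ ×ˢ {x₁}), ?_, Or.inr ⟨mem_univ _, rfl⟩,
        Or.inl ⟨rfl, mem_univ _⟩, ?_⟩
      · rintro ⟨u, v⟩ (⟨h1, _⟩ | ⟨_, h2⟩)
        · rw [mem_singleton_iff] at h1; subst h1; exact fun h => hs h.1
        · rw [mem_singleton_iff] at h2; subst h2; exact fun h => hx₁ h.2
      · exact IsPreconnected.union (s, x₁) ⟨rfl, mem_univ _⟩ ⟨mem_univ _, rfl⟩
          (isPreconnected_singleton.prod isPreconnected_univ)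
          (isPreconnected_univ.prod isPreconnected_singleton)
    · refine ⟨(univ ×ˢ {x}) ∪ ({R + 1} ×ˢ univ), ?_, Or.inr ⟨rfl, mem_univ _⟩,
        Or.inl ⟨mem_univ _, rfl⟩, ?_⟩
      · rintro ⟨u, v⟩ (⟨_, h2⟩ | ⟨h1, _⟩)
        · rw [mem_singleton_iff] at h2; subst h2; exact fun h => hx h.2
        · rw [mem_singleton_iff] at h1; subst h1; exact fun h => hR1 h.1
      · exact IsPreconnected.union (R + 1, x) ⟨mem_univ _, rfl⟩ ⟨rfl, mem_univ _⟩
          (isPreconnected_univ.prod isPreconnected_singleton)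
          (isPreconnected_singleton.prod isPreconnected_univ)

lemma aux_master (S B : Set (ℝ × X')) (hB : IsBounded B) (hBc : IsConnected Bᶜ)
    (hS : Bᶜ ⊆ S) :
    ∃ E₀ : Set (ℝ × X'), Bᶜ ⊆ E₀ ∧ IsUnbddConnComp S E₀ ∧
      ∀ E, IsUnbddConnComp S E → E = E₀ := by
  obtain ⟨a, ha⟩ := hBc.nonempty
  have hBcU : ¬ IsBounded (Bᶜ : Set (ℝ × X')) := by
    intro h
    exact aux_univ_unbounded (by rw [← union_compl_self B]; exact hB.union h)
  refine ⟨connectedComponentIn S a,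
    hBc.isPreconnected.subset_connectedComponentIn ha hS, ⟨⟨a, hS ha, rfl⟩, ?_⟩, ?_⟩
  · exact fun h => hBcU (h.subset (hBc.isPreconnected.subset_connectedComponentIn ha hS))
  · rintro E ⟨⟨x, hx, rfl⟩, hub⟩
    have hnotsub : ¬ connectedComponentIn S x ⊆ B := fun h => hub (hB.subset h)
    obtain ⟨p, hpE, hpB⟩ := Set.not_subset.mp hnotsub
    have h1 : connectedComponentIn S x = connectedComponentIn S p :=
      connectedComponentIn_eq hpE
    have h2 : Bᶜ ⊆ connectedComponentIn S p :=
      hBc.isPreconnected.subset_connectedComponentIn hpB hS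
    have h3 : connectedComponentIn S p = connectedComponentIn S a :=
      connectedComponentIn_eq (h2 ha)
    rw [h1, h3]

end Aux

/-- If `X'` is a nonempty, connected, noncompact metric space, then in `X = ℝ × X'`
(with the sup product metric, which is the default product metric) every compact set
has exactly one unbounded connected component in its complement; in particular, for
every compact `K ⊆ X` there is exactly one end of `X` with respect to `K`. -/
theorem product_with_line_one_end {X' : Type*} [MetricSpace X'] [Nonempty X']
    [ConnectedSpace X'] [NoncompactSpace X'] :
    ∀ K : Set (ℝ × X'), IsCompact K →
      (∃! E : Set (ℝ × X'), IsUnbddConnComp Kᶜ E) ∧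
      (∃! E : Set (ℝ × X'), IsEnd K E) := by
  intro K hK
  obtain ⟨B, hBcpt, hKB, hBconn⟩ := aux_exists_box K hK
  have hS : Bᶜ ⊆ Kᶜ := compl_subset_compl.mpr hKB
  obtain ⟨E₀, hsub, hcomp, huniq⟩ := aux_master Kᶜ B hBcpt.isBounded hBconn hS
  refine ⟨⟨E₀, hcomp, fun E hE => huniq E hE⟩, ⟨E₀, ⟨hcomp, ?_⟩, ?_⟩⟩
  · intro K' hK' _
    obtain ⟨B', hB'cpt, hKB', hB'conn⟩ := aux_exists_box (K' ∪ B) (hK'.union hBcpt)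
    have h1 : B'ᶜ ⊆ E₀ \ K' := by
      intro p hp
      have hp' : p ∉ K' ∪ B := fun h => hp (hKB' h)
      exact ⟨hsub (fun h => hp' (Or.inr h)), fun h => hp' (Or.inl h)⟩
    obtain ⟨E', _, hcomp', huniq'⟩ := aux_master (E₀ \ K') B' hB'cpt.isBounded hB'conn h1
    exact ⟨E', hcomp', huniq'⟩
  · rintro E ⟨hE, _⟩
    exact huniq E hE
end

section
/- Let N > 1 be a real number, let I, J ⊆ ℝ be open intervals, let φ : I → ℝ be twice differentiable with φ(x) > 0 and (1/(1−N))·φ(x)·φ''(x) = 1 − (1/(1−N)²)·φ'(x)² for every x ∈ I, and let η : I → J be a differentiable bijection with η'(x) = 1/φ(x) for every x ∈ I. Define ψ : J → ℝ by ψ(η(x)) := φ'(x)/(1−N) for x ∈ I. Then ψ is differentiable on J and ψ'(z) = 1 − ψ(z)² for every z ∈ J. -/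
/-- Change-of-variable computation: if `φ > 0` satisfies
`(1/(1-N)) φ φ'' = 1 - (1/(1-N)²) (φ')²` on the open interval `I`, `η : I → J` is a
differentiable bijection with `η' = 1/φ`, and `ψ` is defined on `J` by
`ψ (η x) = φ' x / (1-N)`, then `ψ` is differentiable on `J` with `ψ' = 1 - ψ²`. -/
theorem change_of_variable_ode (N : ℝ) (hN : 1 < N)
    (I J : Set ℝ) (hI : IsOpen I) (hIc : I.OrdConnected)
    (hJ : IsOpen J) (hJc : J.OrdConnected)
    (φ φ' φ'' η ψ : ℝ → ℝ)
    (hφd : ∀ x ∈ I, HasDerivAt φ (φ' x) x)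
    (hφd2 : ∀ x ∈ I, HasDerivAt φ' (φ'' x) x)
    (hφpos : ∀ x ∈ I, 0 < φ x)
    (hode : ∀ x ∈ I,
      (1 / (1 - N)) * (φ x * φ'' x) = 1 - (1 / (1 - N) ^ 2) * (φ' x) ^ 2)
    (hη : Set.BijOn η I J)
    (hηd : ∀ x ∈ I, HasDerivAt η (1 / φ x) x)
    (hψ : ∀ x ∈ I, ψ (η x) = φ' x / (1 - N)) :
    ∀ z ∈ J, HasDerivAt ψ (1 - (ψ z) ^ 2) z := by
  have hNne : (1 : ℝ) - N ≠ 0 := by linarith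
  -- η is strictly monotone on I
  have hmono : StrictMonoOn η I := by
    apply StrictMonoOn.mono (s := I) ?_ le_rfl
    apply strictMonoOn_of_deriv_pos (hIc.convex) ?_ ?_
    · exact fun x hx => (hηd x hx).continuousAt.continuousWithinAt
    · intro x hx
      rw [hI.interior_eq] at hx
      rw [(hηd x hx).deriv]
      have := hφpos x hx
      positivity
  -- the inverse function
  set g : ℝ → ℝ := Function.invFunOn η I with hg
  have hgI : ∀ z ∈ J, g z ∈ I := by
    intro z hz
    obtain ⟨x, hx, hxz⟩ := hη.surjOn hz
    exact Function.invFunOn_mem ⟨x, hx, hxz⟩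
  have hηg : ∀ z ∈ J, η (g z) = z := by
    intro z hz
    obtain ⟨x, hx, hxz⟩ := hη.surjOn hz
    exact Function.invFunOn_eq ⟨x, hx, hxz⟩
  have hgη : ∀ x ∈ I, g (η x) = x := fun x hx =>
    hη.injOn (hgI _ (hη.mapsTo hx)) hx (hηg _ (hη.mapsTo hx))
  have hgmono : StrictMonoOn g J := by
    intro z₁ hz₁ z₂ hz₂ hlt
    by_contra h
    push_neg at h
    rcases h.lt_or_eq with h | h
    · exact absurd (hmono (hgI _ hz₂) (hgI _ hz₁) h) (by rw [hηg _ hz₁, hηg _ hz₂]; exact not_lt.2 hlt.le)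
    · rw [← hηg _ hz₁, ← hηg _ hz₂, h] at hlt; exact lt_irrefl _ hlt
  have hgJ : g '' J = I := by
    apply Set.Subset.antisymm
    · rintro _ ⟨z, hz, rfl⟩; exact hgI z hz
    · intro x hx; exact ⟨η x, hη.mapsTo hx, hgη x hx⟩
  intro z hz
  set x := g z with hx
  have hxI : x ∈ I := hgI z hz
  have hφx : (0:ℝ) < φ x := hφpos x hxI
  have hgc : ContinuousAt g z :=
    hgmono.continuousAt_of_image_mem_nhds (hJ.mem_nhds hz)
      (by rw [hgJ]; exact hI.mem_nhds hxI)
  have hgd : HasDerivAt g (1 / φ x)⁻¹ z := by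
    apply HasDerivAt.of_local_left_inverse hgc (hηd x hxI) (by positivity)
    filter_upwards [hJ.mem_nhds hz] with y hy using hηg y hy
  have hgd' : HasDerivAt g (φ x) z := by
    simpa using hgd
  -- ψ agrees with (φ'/(1-N)) ∘ g near z
  have hcomp : HasDerivAt (fun y => φ' (g y) / (1 - N)) (φ'' x / (1 - N) * φ x) z := by
    have := ((hφd2 x hxI).comp z hgd').div_const (1 - N)
    simpa [mul_comm, mul_div_assoc] using this
  have heq : ψ =ᶠ[nhds z] fun y => φ' (g y) / (1 - N) := by
    filter_upwards [hJ.mem_nhds hz] with y hy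
    conv_lhs => rw [← hηg y hy, hψ _ (hgI y hy)]
  have hψz : ψ z = φ' x / (1 - N) := by
    conv_lhs => rw [← hηg z hz, hψ _ hxI]
  have hval : φ'' x / (1 - N) * φ x = 1 - ψ z ^ 2 := by
    rw [hψz]
    have := hode x hxI
    field_simp at this ⊢
    linarith
  rw [← hval]
  exact hcomp.congr_of_eventuallyEq heq
end
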